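/- arXiv:1208.4242 — 3 statements merged into one kernel-verified Lean document; each statement's English description precedes it below -/
import Mathlib

section
/- Let q = 11^r with r an odd positive integer, and let F be a finite field with q elements. For every γ ∈ F, the number of triples (x,y,t) ∈ F³ satisfying y² = x³ + γ·x + t¹¹ − t is exactly q². -/
/-!
When `-1` is not a square in a finite field, `a` and `-a` together have exactly two square roots
for every `a` (one each if `a = 0`, otherwise both or neither by the quadratic character). The
involution `(x, t) ↦ (-x, -t)` negates `x³ + γx + t¹¹ - t`, so summing the number of square roots
over `(x, t)` gives the same total for the right-hand side and for its negative; these two totals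
add up to `2q²`.
-/

open Finset

theorem pow_mod_four_eq_three_of_odd {p r : ℕ} (hp : p % 4 = 3) (hr : Odd r) :
    p ^ r % 4 = 3 := by
  obtain ⟨k, rfl⟩ := hr
  rw [Nat.pow_mod, hp, pow_succ, pow_mul, Nat.mul_mod, Nat.pow_mod]
  norm_num

section SquareRoots

variable {F : Type*} [Field F] [Fintype F]

theorem natCard_sqrts_add_natCard_sqrts_neg (hneg : ¬IsSquare (-1 : F)) (a : F) :
    Nat.card {y : F // y ^ 2 = a} + Nat.card {y : F // y ^ 2 = -a} = 2 := by
  classical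
  have hchar : ringChar F ≠ 2 := fun h => hneg (FiniteField.isSquare_of_char_two h _)
  have hcard (b : F) : (Nat.card {y : F // y ^ 2 = b} : ℤ) = quadraticChar F b + 1 := by
    rw [← quadraticChar_card_sqrts hchar b, Set.toFinset_card, Nat.card_eq_fintype_card]
    rfl
  have hχ : quadraticChar F (-a) = -quadraticChar F a := by
    rw [neg_eq_neg_one_mul, map_mul, quadraticChar_neg_one_iff_not_isSquare.mpr hneg, neg_one_mul]
  have := hcard a
  have := hcard (-a)
  omega

theorem natCard_sq_eq_of_map_perm_eq_neg {V : Type*} [Fintype V] (hneg : ¬IsSquare (-1 : F))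
    (f : V → F) (σ : Equiv.Perm V) (hσ : ∀ v, f (σ v) = -f v) :
    Nat.card {p : V × F // p.2 ^ 2 = f p.1} = Fintype.card V := by
  have hsum : Nat.card {p : V × F // p.2 ^ 2 = f p.1} = ∑ v, Nat.card {y : F // y ^ 2 = f v} := by
    rw [Nat.card_congr (Equiv.subtypeProdEquivSigmaSubtype fun v (y : F) => y ^ 2 = f v),
      Nat.card_sigma]
  have hflip : ∑ v, Nat.card {y : F // y ^ 2 = f v} = ∑ v, Nat.card {y : F // y ^ 2 = -f v} := by
    rw [← Equiv.sum_comp σ]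
    simp only [hσ]
  have htwice : 2 * Nat.card {p : V × F // p.2 ^ 2 = f p.1} = 2 * Fintype.card V := by
    calc 2 * Nat.card {p : V × F // p.2 ^ 2 = f p.1}
        = ∑ v, (Nat.card {y : F // y ^ 2 = f v} + Nat.card {y : F // y ^ 2 = -f v}) := by
          rw [sum_add_distrib, ← hflip, hsum, two_mul]
      _ = 2 * Fintype.card V := by
          simp [natCard_sqrts_add_natCard_sqrts_neg hneg, mul_comm]
  omega

end SquareRoots

/-- Let `q = 11^r` with `r` an odd positive integer, and let `F` be a finite field with
`q` elements. For every `γ ∈ F`, the number of triples `(x, y, t) ∈ F³` satisfying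
`y² = x³ + γ·x + t¹¹ − t` is exactly `q²`. -/
theorem stmt0 (r : ℕ) (hr : Odd r) (F : Type*) [Field F] [Fintype F]
    (hF : Fintype.card F = 11 ^ r) (γ : F) :
    Nat.card {p : F × F × F // p.2.1 ^ 2 = p.1 ^ 3 + γ * p.1 + p.2.2 ^ 11 - p.2.2}
      = (11 ^ r) ^ 2 := by
  have hq : Fintype.card F % 4 = 3 := hF ▸ pow_mod_four_eq_three_of_odd (by norm_num) hr
  have hneg : ¬IsSquare (-1 : F) := by
    rw [FiniteField.isSquare_neg_one_iff]
    omega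
  let f : F × F → F := fun v => v.1 ^ 3 + γ * v.1 + v.2 ^ 11 - v.2
  have hodd (v : F × F) : f (-v) = -f v := by
    simp only [f, Prod.fst_neg, Prod.snd_neg]
    ring
  let e : {p : F × F × F // p.2.1 ^ 2 = p.1 ^ 3 + γ * p.1 + p.2.2 ^ 11 - p.2.2} ≃
      {p : (F × F) × F // p.2 ^ 2 = f p.1} :=
    Equiv.subtypeEquiv
      ⟨fun p => ((p.1, p.2.2), p.2.1), fun p => (p.1.1, p.2, p.1.2), fun _ => rfl, fun _ => rfl⟩
      fun _ => Iff.rfl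
  rw [Nat.card_congr e, natCard_sq_eq_of_map_perm_eq_neg hneg _ (Equiv.neg _) hodd,
    Fintype.card_prod, hF, sq]
end

section
/- Let R be a commutative ring and let u, v, w ∈ R satisfy u¹¹ + v¹¹ + w¹¹ + 1 = 0. Set x = −u¹¹·v¹¹, y = −u²²·v¹¹, t = −w·u³·v². Then y² + x·y = x³ + t¹¹. -/
/-- Let `R` be a commutative ring and let `u, v, w ∈ R` satisfy
`u¹¹ + v¹¹ + w¹¹ + 1 = 0`. Set `x = −u¹¹·v¹¹`, `y = −u²²·v¹¹`, `t = −w·u³·v²`.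
Then `y² + x·y = x³ + t¹¹`. -/
theorem stmt13 (R : Type*) [CommRing R] (u v w : R) (h : u ^ 11 + v ^ 11 + w ^ 11 + 1 = 0)
    (x y t : R) (hx : x = -(u ^ 11 * v ^ 11)) (hy : y = -(u ^ 22 * v ^ 11))
    (ht : t = -(w * u ^ 3 * v ^ 2)) :
    y ^ 2 + x * y = x ^ 3 + t ^ 11 := by
  subst hx hy ht
  linear_combination (u ^ 33 * v ^ 22) * h
end

section
/- The polynomial P₁(T) = T²⁰ + T¹⁹ + 2T¹⁸ + T¹⁷ + T¹⁶ + 2T¹⁵ + 3T¹⁴ + 5T¹³ + 4T¹² + 3T¹¹ + (23/11)·T¹⁰ + 3T⁹ + 4T⁸ + 5T⁷ + 3T⁶ + 2T⁵ + T⁴ + T³ + 2T² + T + 1 ∈ ℚ[T] is irreducible over ℚ, and no complex root of unity is a root of P₁ (i.e. if z ∈ ℂ satisfies zⁿ = 1 for some n ≥ 1, then P₁(z) ≠ 0). -/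
open Polynomial

/-- The normalized characteristic polynomial of Frobenius for `X_ε`, `ε` a nonzero
square mod 11. -/
noncomputable def P₁ : ℚ[X] :=
  X ^ 20 + X ^ 19 + 2 * X ^ 18 + X ^ 17 + X ^ 16 + 2 * X ^ 15 + 3 * X ^ 14 + 5 * X ^ 13 +
    4 * X ^ 12 + 3 * X ^ 11 + C (23 / 11 : ℚ) * X ^ 10 + 3 * X ^ 9 + 4 * X ^ 8 + 5 * X ^ 7 +
    3 * X ^ 6 + 2 * X ^ 5 + X ^ 4 + X ^ 3 + 2 * X ^ 2 + X + 1

/-!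
Put `Q₁ = 11 • P₁ ∈ ℤ[X]`, a primitive palindromic polynomial of degree 20. Modulo 11 it is
`X¹⁰` while `11 ∥ Q₁(0)`, so in a factorization `Q₁ = A * B` (suitably ordered) with `B` not a
unit, `A` is Eisenstein at 11 of degree 10 and all nonconstant coefficients of `B` are divisible
by 11. Being palindromic, `Q₁ = rev A * rev B`; as `A` is prime it divides `rev A` or `rev B`,
and comparing the constant and leading coefficients rules out the first case. So
`rev B = c • A`, and then the self-reciprocal irreducible `X² + 3X + 1` divides `Q₁` modulo 43
only if it divides both `A` and `B`, whereas it divides `Q₁` exactly once. Finally a root of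
unity is integral over `ℤ`, so its minimal polynomial over `ℚ` has integer coefficients, which
`P₁` (with coefficient `23/11`) does not.
-/

namespace Polynomial

section Reflect

variable {R : Type*} [Semiring R] [NoZeroDivisors R]

theorem exists_eq_mul_C_of_dvd_of_natDegree_le {a f : R[X]} (h : a ∣ f)
    (hf : f.natDegree ≤ a.natDegree) : ∃ c, f = a * C c := by
  obtain ⟨t, rfl⟩ := h
  by_cases ht : t = 0
  · exact ⟨0, by simp [ht]⟩
  by_cases ha : a = 0
  · exact ⟨0, by simp [ha]⟩
  rw [natDegree_mul ha ht] at hf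
  exact ⟨t.coeff 0, by rw [← eq_C_of_natDegree_eq_zero (by omega)]⟩

theorem dvd_reflect_of_dvd {q f : R[X]} {N : ℕ} (hq : reflect q.natDegree q = q)
    (hf : f.natDegree ≤ N) (h : q ∣ f) : q ∣ reflect N f := by
  obtain ⟨u, rfl⟩ := h
  by_cases hu : u = 0
  · simp [hu]
  by_cases hq0 : q = 0
  · simp [hq0]
  rw [natDegree_mul hq0 hu] at hf
  obtain ⟨k, rfl⟩ : ∃ k, N = q.natDegree + k := ⟨N - q.natDegree, by omega⟩
  rw [reflect_mul q u le_rfl (by omega : u.natDegree ≤ k), hq]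
  exact dvd_mul_right _ _

end Reflect

theorem exists_reflect_eq_mul_C {R : Type*} [CommSemiring R] [NoZeroDivisors R] {A B : R[X]}
    {m : ℕ} {r : R} (hA : Prime A) (hAm : A.natDegree = m) (hBm : B.natDegree ≤ m)
    (hrefl : reflect m A * reflect m B = A * B) (h0 : r ∣ A.coeff 0) (hm : ¬ r ∣ A.coeff m) :
    ∃ c, reflect m B = A * C c := by
  have hdvd : A ∣ reflect m A * reflect m B := hrefl ▸ dvd_mul_right A B
  rcases hA.dvd_or_dvd hdvd with h | h
  · obtain ⟨c, hc⟩ := exists_eq_mul_C_of_dvd_of_natDegree_le h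
      (natDegree_reflect_le.trans (by omega))
    have hcoeff := congrArg (coeff · 0) hc
    simp only [coeff_reflect, revAt_zero, coeff_mul_C] at hcoeff
    exact absurd (hcoeff ▸ h0.mul_right c) hm
  · exact exists_eq_mul_C_of_dvd_of_natDegree_le h (natDegree_reflect_le.trans (by omega))

theorem sq_dvd_mul_of_reflect_eq_mul_C {K : Type*} [Field K] {q a b : K[X]} {m : ℕ} {c : K}
    (hq : Prime q) (hqrefl : reflect q.natDegree q = q) (hb : b ≠ 0) (hbm : b.natDegree ≤ m)
    (hab : reflect m b = a * C c) (hdvd : q ∣ a * b) : q ^ 2 ∣ a * b := by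
  have hc : c ≠ 0 := by
    rintro rfl
    rw [C_0, mul_zero, reflect_eq_zero_iff] at hab
    exact hb hab
  have ha_of_b (h : q ∣ b) : q ∣ a := by
    have h' := dvd_reflect_of_dvd hqrefl hbm h
    rw [hab] at h'
    exact (hq.dvd_or_dvd h').resolve_right
      fun h'' => hq.not_isUnit (isUnit_of_dvd_unit h'' (isUnit_C.mpr hc.isUnit))
  have hb_of_a (h : q ∣ a) : q ∣ b := by
    have h' := dvd_reflect_of_dvd (N := m) hqrefl (natDegree_reflect_le.trans (by omega))
      (hab ▸ h.mul_right (C c))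
    rwa [reflect_reflect] at h'
  rw [sq]
  rcases hq.dvd_or_dvd hdvd with h | h
  · exact mul_dvd_mul h (hb_of_a h)
  · exact mul_dvd_mul (ha_of_b h) h

theorem not_sq_dvd_of_eq_sq_mul_add_mul {R : Type*} [CommRing R] [IsDomain R] {f q u v : R[X]}
    (h : f = q ^ 2 * u + q * v) (hv : v ≠ 0) (hvq : v.degree < q.degree) : ¬ q ^ 2 ∣ f := by
  intro hf
  have hq : q ≠ 0 := fun hq => by simp [hq] at hvq
  have hqv : q * q ∣ q * v := by
    rw [← sq]
    exact (dvd_add_right (dvd_mul_right _ _)).mp (h ▸ hf)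
  exact hv (eq_zero_of_dvd_of_degree_lt ((mul_dvd_mul_iff_left hq).mp hqv) hvq)

theorem natDegree_eq_of_dvd_coeff_iff {R : Type*} [CommSemiring R] [NoZeroDivisors R]
    {Q A B : R[X]} {m : ℕ} {r : R} (hQ : Q = A * B) (hdeg : Q.natDegree = 2 * m)
    (hlead : ¬ r ^ 2 ∣ Q.leadingCoeff) (hA : ∀ j, r ∣ A.coeff j ↔ j ≠ m)
    (hB : ∀ j, r ∣ B.coeff j ↔ j ≠ 0) (hB0 : B.natDegree ≠ 0) :
    A.natDegree = m ∧ B.natDegree = m := by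
  have hAm : A.coeff m ≠ 0 := fun h => (hA m).mp (h ▸ dvd_zero _) rfl
  have hA0 : A ≠ 0 := fun h => hAm (by simp [h])
  have hB0' : B ≠ 0 := fun h => hB0 (by simp [h])
  have hAdeg : A.natDegree = m := by
    refine le_antisymm ?_ (le_natDegree_of_ne_zero hAm)
    by_contra! hne
    refine hlead ?_
    rw [hQ, leadingCoeff_mul, sq]
    exact mul_dvd_mul ((hA _).mpr hne.ne') ((hB _).mpr hB0)
  have := natDegree_mul hA0 hB0'
  rw [← hQ] at this
  omega

section ModPrime

variable {ℓ : ℕ} [Fact ℓ.Prime]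

theorem dvd_coeff_iff_ne_of_map_eq_mul_X_pow {f : ℤ[X]} {u : (ZMod ℓ)[X]} {k : ℕ}
    (hu : IsUnit u) (hf : f.map (Int.castRingHom (ZMod ℓ)) = u * X ^ k) (j : ℕ) :
    (ℓ : ℤ) ∣ f.coeff j ↔ j ≠ k := by
  obtain ⟨c, hc, rfl⟩ := isUnit_iff.mp hu
  have hj := congrArg (coeff · j) hf
  simp only [coeff_map, coeff_C_mul_X_pow, eq_intCast] at hj
  rw [← ZMod.intCast_zmod_eq_zero_iff_dvd, hj]
  split_ifs with h <;> simp [h, hc.ne_zero]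

theorem exists_dvd_coeff_iff_of_associated_map_mul {A B : ℤ[X]} {m : ℕ}
    (h : Associated ((A * B).map (Int.castRingHom (ZMod ℓ))) (X ^ m)) :
    ∃ k ≤ m, (∀ j, (ℓ : ℤ) ∣ A.coeff j ↔ j ≠ k) ∧ (∀ j, (ℓ : ℤ) ∣ B.coeff j ↔ j ≠ m - k) := by
  obtain ⟨u, hu⟩ := h.symm
  rw [Polynomial.map_mul, mul_comm] at hu
  obtain ⟨i, j, b, c, rfl, hbc, hA, hB⟩ := mul_eq_mul_prime_pow prime_X hu.symm
  have hunit : IsUnit (b * c) := hbc ▸ u.isUnit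
  refine ⟨i, by omega, dvd_coeff_iff_ne_of_map_eq_mul_X_pow (isUnit_of_mul_isUnit_left hunit) hA,
    ?_⟩
  rw [Nat.add_sub_cancel_left]
  exact dvd_coeff_iff_ne_of_map_eq_mul_X_pow (isUnit_of_mul_isUnit_right hunit) hB

theorem irreducible_of_dvd_coeff_iff {f : ℤ[X]} (hprim : f.IsPrimitive) (hdeg : 0 < f.natDegree)
    (hf : ∀ j, (ℓ : ℤ) ∣ f.coeff j ↔ j ≠ f.natDegree) (h0 : ¬ (ℓ : ℤ) ^ 2 ∣ f.coeff 0) :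
    Irreducible f := by
  have hℓ : Prime (ℓ : ℤ) := Nat.prime_iff_prime_int.mp Fact.out
  refine irreducible_of_eisenstein_criterion (P := Ideal.span {(ℓ : ℤ)})
    ((Ideal.span_singleton_prime hℓ.ne_zero).mpr hℓ) ?_ (fun n hn => ?_)
    (natDegree_pos_iff_degree_pos.mp hdeg) ?_ hprim
  · rw [Ideal.mem_span_singleton, leadingCoeff, hf]
    exact fun h => h rfl
  · rw [Ideal.mem_span_singleton, hf]
    exact (coe_lt_degree.mp hn).ne
  · rwa [Ideal.span_singleton_pow, Ideal.mem_span_singleton]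

theorem isUnit_of_mul_eq_of_dvd_coeff_iff {K : Type*} [Field K] {Q A B : ℤ[X]} {m : ℕ}
    {q : K[X]} (hQ : Q = A * B) (hprim : Q.IsPrimitive) (hdeg : Q.natDegree = 2 * m)
    (hpal : reflect (2 * m) Q = Q) (hℓ : ¬ (ℓ : ℤ) ^ 2 ∣ Q.coeff 0)
    (hA : ∀ j, (ℓ : ℤ) ∣ A.coeff j ↔ j ≠ m) (hB : ∀ j, (ℓ : ℤ) ∣ B.coeff j ↔ j ≠ 0)
    (hq : Prime q) (hqrefl : reflect q.natDegree q = q)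
    (hqQ : q ∣ Q.map (Int.castRingHom K)) (hqQ2 : ¬ q ^ 2 ∣ Q.map (Int.castRingHom K)) :
    IsUnit B := by
  by_cases hB0 : B.natDegree = 0
  · rw [eq_C_of_natDegree_eq_zero hB0]
    refine (hprim _ ?_).map C
    rw [← eq_C_of_natDegree_eq_zero hB0, hQ]
    exact dvd_mul_left B A
  have hlead : Q.leadingCoeff = Q.coeff 0 := by
    conv_rhs => rw [← hpal]
    rw [coeff_reflect, revAt_zero, leadingCoeff, hdeg]
  obtain ⟨hAm, hBm⟩ := natDegree_eq_of_dvd_coeff_iff hQ hdeg (hlead ▸ hℓ) hA hB hB0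
  have hA0 : ¬ (ℓ : ℤ) ^ 2 ∣ A.coeff 0 := fun h =>
    hℓ (by rw [hQ, mul_coeff_zero]; exact h.mul_right _)
  have hAirr : Irreducible A :=
    irreducible_of_dvd_coeff_iff (isPrimitive_of_dvd hprim ⟨B, hQ⟩) (by omega) (hAm ▸ hA) hA0
  have hrefl : reflect m A * reflect m B = A * B := by
    rw [← reflect_mul A B hAm.le hBm.le, ← two_mul, ← hQ, hpal]
  obtain ⟨c, hc⟩ := exists_reflect_eq_mul_C hAirr.prime hAm hBm.le hrefl
    ((hA 0).mpr (by omega)) (fun h => (hA m).mp h rfl)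
  have hQ0 : Q.map (Int.castRingHom K) ≠ 0 := fun h => hqQ2 (h ▸ dvd_zero _)
  rw [hQ, Polynomial.map_mul] at hqQ hqQ2 hQ0
  have hc' : reflect m (B.map (Int.castRingHom K)) = A.map (Int.castRingHom K) * C (c : K) := by
    rw [reflect_map, hc, Polynomial.map_mul, map_C, eq_intCast]
  exact absurd (sq_dvd_mul_of_reflect_eq_mul_C hq hqrefl (right_ne_zero_of_mul hQ0)
    (natDegree_map_le.trans hBm.le) hc' hqQ) hqQ2

theorem irreducible_of_reflect_eq_of_associated_map {K : Type*} [Field K] {Q : ℤ[X]} {m : ℕ}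
    {q : K[X]} (hprim : Q.IsPrimitive) (hdeg : Q.natDegree = 2 * m)
    (hpal : reflect (2 * m) Q = Q) (hmod : Associated (Q.map (Int.castRingHom (ZMod ℓ))) (X ^ m))
    (hℓ : ¬ (ℓ : ℤ) ^ 2 ∣ Q.coeff 0) (hq : Irreducible q) (hqrefl : reflect q.natDegree q = q)
    (hqQ : q ∣ Q.map (Int.castRingHom K)) (hqQ2 : ¬ q ^ 2 ∣ Q.map (Int.castRingHom K)) :
    Irreducible Q := by
  refine ⟨fun hu => hq.not_isUnit (isUnit_of_dvd_unit hqQ (hu.map (mapRingHom _))),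
    fun A B hQ => ?_⟩
  obtain ⟨k, hkm, hA, hB⟩ := exists_dvd_coeff_iff_of_associated_map_mul (hQ ▸ hmod)
  have hk : k = 0 ∨ k = m := by
    by_contra! hk
    refine hℓ ?_
    rw [hQ, mul_coeff_zero, sq]
    exact mul_dvd_mul ((hA 0).mpr (Ne.symm hk.1)) ((hB 0).mpr (by omega))
  rcases hk with rfl | rfl
  · exact .inl (isUnit_of_mul_eq_of_dvd_coeff_iff (hQ.trans (mul_comm A B)) hprim hdeg hpal hℓ
      (by simpa using hB) hA hq.prime hqrefl hqQ hqQ2)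
  · exact .inr (isUnit_of_mul_eq_of_dvd_coeff_iff hQ hprim hdeg hpal hℓ hA
      (by simpa using hB) hq.prime hqrefl hqQ hqQ2)

end ModPrime

theorem exists_int_eq_coeff_of_isIntegral {S : Type*} [CommRing S] [IsDomain S] [Algebra ℚ S]
    {p : ℚ[X]} (hp : Irreducible p) (hmonic : p.Monic) {z : S} (hz : IsIntegral ℤ z)
    (hroot : aeval z p = 0) (i : ℕ) : ∃ a : ℤ, p.coeff i = a := by
  rw [minpoly.eq_of_irreducible_of_monic hp hroot hmonic,
    minpoly.isIntegrallyClosed_eq_field_fractions' ℚ hz]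
  exact ⟨_, by rw [coeff_map, algebraMap_int_eq, eq_intCast]⟩

end Polynomial

instance fact_prime_eleven : Fact (Nat.Prime 11) := ⟨by norm_num⟩

instance fact_prime_forty_three : Fact (Nat.Prime 43) := ⟨by norm_num⟩

noncomputable def Q₁ : ℤ[X] :=
  11 * X ^ 20 + 11 * X ^ 19 + 22 * X ^ 18 + 11 * X ^ 17 + 11 * X ^ 16 + 22 * X ^ 15 +
    33 * X ^ 14 + 55 * X ^ 13 + 44 * X ^ 12 + 33 * X ^ 11 + 23 * X ^ 10 + 33 * X ^ 9 +
    44 * X ^ 8 + 55 * X ^ 7 + 33 * X ^ 6 + 22 * X ^ 5 + 11 * X ^ 4 + 11 * X ^ 3 +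
    22 * X ^ 2 + 11 * X + 11

noncomputable def q₄₃ : (ZMod 43)[X] := X ^ 2 + 3 * X + 1

theorem Q₁_map_rat : Q₁.map (Int.castRingHom ℚ) = C 11 * P₁ := by
  have h : (11 : ℚ[X]) * C (23 / 11) = 23 := by rw [← C_ofNat, ← C_mul]; norm_num [C_ofNat]
  simp only [Q₁, P₁, Polynomial.map_add, Polynomial.map_mul, Polynomial.map_pow, map_X,
    Polynomial.map_ofNat, C_ofNat]
  linear_combination (-X ^ 10 : ℚ[X]) * h

theorem natDegree_Q₁ : Q₁.natDegree = 20 := by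
  unfold Q₁
  compute_degree!

theorem coeff_Q₁_zero : Q₁.coeff 0 = 11 := by simp [Q₁]

theorem coeff_Q₁_ten : Q₁.coeff 10 = 23 := by simp [Q₁, coeff_X]

theorem reflect_Q₁ : reflect 20 Q₁ = Q₁ := by
  have hX : reflect 20 (X : ℤ[X]) = X ^ 19 := by simpa using reflect_monomial (R := ℤ) 20 1
  simp only [Q₁, reflect_add, ← C_ofNat, reflect_C_mul, reflect_C, reflect_monomial, hX]
  norm_num [revAt_le]
  ring

theorem isPrimitive_Q₁ : Q₁.IsPrimitive := fun r hr => by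
  have h0 := (C_dvd_iff_dvd_coeff r Q₁).mp hr 0
  have h10 := (C_dvd_iff_dvd_coeff r Q₁).mp hr 10
  rw [coeff_Q₁_zero] at h0
  rw [coeff_Q₁_ten] at h10
  exact isUnit_of_dvd_one (by simpa using dvd_sub h10 (h0.mul_left 2))

theorem Q₁_map_zmod_eleven : Q₁.map (Int.castRingHom (ZMod 11)) = X ^ 10 := by
  simp only [Q₁, Polynomial.map_add, Polynomial.map_mul, Polynomial.map_pow, map_X,
    Polynomial.map_ofNat]
  reduce_mod_char

theorem Q₁_map_zmod_forty_three : Q₁.map (Int.castRingHom (ZMod 43)) =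
    q₄₃ ^ 2 * (11 * X ^ 16 + 31 * X ^ 15 + 16 * X ^ 14 + 24 * X ^ 13 + 10 * X ^ 12 + X ^ 11 +
      15 * X ^ 10 + 42 * X ^ 9 + 41 * X ^ 8 + 8 * X ^ 7 + 31 * X ^ 6 + 30 * X ^ 5 +
      36 * X ^ 4 + 3 * X ^ 3 + 10 * X ^ 2 + 27 * X + 29) + q₄₃ * (36 * X + 25) := by
  simp only [Q₁, q₄₃, Polynomial.map_add, Polynomial.map_mul, Polynomial.map_pow, map_X,
    Polynomial.map_ofNat]
  ring_nf
  reduce_mod_char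

theorem degree_q₄₃ : q₄₃.degree = 2 := by
  unfold q₄₃
  compute_degree!

theorem natDegree_q₄₃ : q₄₃.natDegree = 2 := natDegree_eq_of_degree_eq_some degree_q₄₃

theorem irreducible_q₄₃ : Irreducible q₄₃ := by
  refine irreducible_of_degree_le_three_of_not_isRoot (p := q₄₃) (by simp [natDegree_q₄₃])
    fun x => ?_
  simp only [q₄₃, IsRoot, eval_add, eval_pow, eval_X, eval_mul, eval_ofNat, eval_one]
  revert x
  decide

theorem reflect_q₄₃ : reflect q₄₃.natDegree q₄₃ = q₄₃ := by
  have hX : reflect 2 (X : (ZMod 43)[X]) = X := by simpa using reflect_monomial (R := ZMod 43) 2 1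
  rw [natDegree_q₄₃]
  simp only [q₄₃, reflect_add, ← C_ofNat, reflect_C_mul, reflect_monomial, reflect_one, hX]
  norm_num [revAt_le]
  ring

theorem irreducible_Q₁ : Irreducible Q₁ := by
  have h43 := Q₁_map_zmod_forty_three
  have hdeg : Q₁.natDegree = 2 * 10 := natDegree_Q₁
  have h11 : Associated (Q₁.map (Int.castRingHom (ZMod 11))) (X ^ 10) := by
    rw [Q₁_map_zmod_eleven]
  have h0 : ¬ ((11 : ℕ) : ℤ) ^ 2 ∣ Q₁.coeff 0 := by rw [coeff_Q₁_zero]; decide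
  have hv : (36 * X + 25 : (ZMod 43)[X]).degree = 1 := by compute_degree!
  exact irreducible_of_reflect_eq_of_associated_map isPrimitive_Q₁ hdeg reflect_Q₁ h11 h0
    irreducible_q₄₃ reflect_q₄₃
    (h43 ▸ dvd_add (dvd_mul_of_dvd_left (dvd_pow_self _ two_ne_zero) _) (dvd_mul_right _ _))
    (not_sq_dvd_of_eq_sq_mul_add_mul h43 (fun h => by simp [h] at hv)
      (by rw [hv, degree_q₄₃]; norm_num))

theorem irreducible_P₁ : Irreducible P₁ := by
  have h := (IsPrimitive.Int.irreducible_iff_irreducible_map_cast isPrimitive_Q₁).mp irreducible_Q₁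
  rwa [Q₁_map_rat, irreducible_isUnit_mul (isUnit_C.mpr (by norm_num))] at h

theorem monic_P₁ : P₁.Monic := by
  unfold P₁
  monicity!

theorem coeff_P₁_ten : P₁.coeff 10 = 23 / 11 := by simp [P₁, coeff_X, coeff_one]

/-- `P₁` is irreducible over `ℚ`, and no complex root of unity is a root of `P₁`. -/
theorem stmt14 :
    Irreducible P₁ ∧ ∀ z : ℂ, (∃ n : ℕ, 1 ≤ n ∧ z ^ n = 1) → aeval z P₁ ≠ 0 := by
  refine ⟨irreducible_P₁, ?_⟩
  rintro z ⟨n, hn, hzn⟩ hroot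
  have hz : IsIntegral ℤ z := IsIntegral.of_pow hn (hzn ▸ isIntegral_one)
  obtain ⟨a, ha⟩ := exists_int_eq_coeff_of_isIntegral irreducible_P₁ monic_P₁ hz hroot 10
  rw [coeff_P₁_ten] at ha
  have : (11 : ℤ) * a = 23 := by exact_mod_cast (by rw [← ha]; norm_num : (11 : ℚ) * a = 23)
  omega
end
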